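/- For any pQTSs A_i and A_s, trace distribution inclusion implies pioco: if trd(A_i) ⊆ trd(A_s) (meaning every trace distribution of A_i is matched by one of A_s assigning equal probabilities to all finite traces), then A_i ⊑_pioco A_s. -/

import Mathlib

noncomputable section
attribute [local instance] Classical.propDecidable

structure pQTS (S L T : Type) [Fintype S] [Fintype L] [Fintype T] where
  init : S
  inputs : Set L
  delta : L
  delta_not_input : delta ∉ inputs
  src : T → S
  dist : T → L × S → ℝ
  dist_nonneg : ∀ t x, 0 ≤ dist t x
  dist_sum : ∀ t, ∑ x, dist t x = 1
  input_reactive : ∀ t (a : L) (s' : S), a ∈ inputs → 0 < dist t (a, s') →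
    ∀ (b : L) (s'' : S), b ≠ a → dist t (b, s'') = 0

variable {S L T : Type} [Fintype S] [Fintype L] [Fintype T]

/-- A step of a path: the transition (distribution) taken, the action, the target state. -/
abbrev PStep (S L T : Type) := T × L × S

/-- A finite path, stored with the most recent step first. -/
abbrev PPath (S L T : Type) := List (PStep S L T)

def lastState (A : pQTS S L T) : PPath S L T → S
  | [] => A.init
  | x :: _ => x.2.2

def ValidPath (A : pQTS S L T) : PPath S L T → Prop
  | [] => True
  | x :: π => ValidPath A π ∧ A.src x.1 = lastState A π ∧ 0 < A.dist x.1 (x.2.1, x.2.2)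

def ptrace : PPath S L T → List L
  | [] => []
  | x :: π => ptrace π ++ [x.2.1]

/-- A (partial, randomized, history-dependent) adversary: to each finite path it assigns
a distribution over the available transitions (`some t`) plus halting (`none`). -/
def IsAdversary (A : pQTS S L T) (E : PPath S L T → Option T → ℝ) : Prop :=
  (∀ π o, 0 ≤ E π o) ∧
  (∀ π t, 0 < E π (some t) → A.src t = lastState A π) ∧
  (∀ π, E π none + ∑ t, E π (some t) = 1)

/-- The path probability function `Q^E`. -/
def Qprob (A : pQTS S L T) (E : PPath S L T → Option T → ℝ) : PPath S L T → ℝ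
  | [] => 1
  | x :: π => Qprob A E π * E π (some x.1) * A.dist x.1 (x.2.1, x.2.2)

def pathsOfLength (A : pQTS S L T) : ℕ → Finset (PPath S L T)
  | 0 => {[]}
  | n + 1 => (pathsOfLength A n).biUnion
      (fun π => Finset.univ.image (fun x : PStep S L T => x :: π))

/-- The cone probability `P_H(C_σ)` of a finite trace σ under the trace distribution of `E`. -/
def traceProb (A : pQTS S L T) (E : PPath S L T → Option T → ℝ) (σ : List L) : ℝ :=
  ∑ π ∈ (pathsOfLength A σ.length).filter (fun π => ValidPath A π ∧ ptrace π = σ),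
    Qprob A E π

def haltsAfter (E : PPath S L T → Option T → ℝ) (k : ℕ) : Prop :=
  ∀ π : PPath S L T, k ≤ π.length → E π none = 1

/-- `trd A k`: trace distributions of adversaries of `A` halting after `k` steps,
represented by their cone probability functions on finite traces. -/
def trd (A : pQTS S L T) (k : ℕ) : Set (List L → ℝ) :=
  {f | ∃ E, IsAdversary A E ∧ haltsAfter E k ∧ ∀ σ, f σ = traceProb A E σ}

/-- `trdAll A`: all trace distributions of `A`. -/
def trdAll (A : pQTS S L T) : Set (List L → ℝ) :=
  {f | ∃ E, IsAdversary A E ∧ ∀ σ, f σ = traceProb A E σ}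

/-- `H ⊑_k H'` : the two trace distributions agree on all traces of length `k`. -/
def prefixTD (L : Type) (k : ℕ) (H H' : List L → ℝ) : Prop :=
  ∀ σ : List L, σ.length = k → H σ = H' σ

/-- Output continuations of `H` in `A` w.r.t. length `k`. -/
def outcont (H : List L → ℝ) (A : pQTS S L T) (k : ℕ) : Set (List L → ℝ) :=
  {H' | H' ∈ trd A (k + 1) ∧ prefixTD L k H H' ∧
    ∀ (σ : List L) (a : L), σ.length = k → a ∈ A.inputs → H' (σ ++ [a]) = 0}

def inputEnabled (A : pQTS S L T) : Prop :=
  ∀ s : S, ∀ a ∈ A.inputs, ∃ (t : T) (s' : S), A.src t = s ∧ 0 < A.dist t (a, s')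

def pioco {S1 T1 S2 T2 : Type} [Fintype S1] [Fintype T1] [Fintype S2] [Fintype T2]
    (Ai : pQTS S1 L T1) (As : pQTS S2 L T2) : Prop :=
  ∀ k : ℕ, ∀ H ∈ trd As k, outcont H Ai k ⊆ outcont H As k

def Traces (A : pQTS S L T) : Set (List L) :=
  {σ | ∃ π : PPath S L T, ValidPath A π ∧ ptrace π = σ}

/-- `out_A(σ)`: outputs (including quiescence) enabled after trace σ. -/
def outSet (A : pQTS S L T) (σ : List L) : Set L :=
  {a | a ∉ A.inputs ∧ ∃ π : PPath S L T, ValidPath A π ∧ ptrace π = σ ∧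
    ∃ (t : T) (s' : S), A.src t = lastState A π ∧ 0 < A.dist t (a, s')}

def ioco {S1 T1 S2 T2 : Type} [Fintype S1] [Fintype T1] [Fintype S2] [Fintype T2]
    (Ai : pQTS S1 L T1) (As : pQTS S2 L T2) : Prop :=
  ∀ σ ∈ Traces As, outSet Ai σ ⊆ outSet As σ

/-- A (nonprobabilistic) QTS: every occurring distribution is a Dirac distribution. -/
def IsQTS (A : pQTS S L T) : Prop :=
  ∀ t : T, ∃ x : L × S, ∀ y, A.dist t y = if y = x then 1 else 0

/-! Trace distribution inclusion says nothing about halting, but an `A_s`-adversary matching a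
`k`-halting `A_i`-adversary can be forced to halt after `k` steps without changing any cone
probability: the paths it would take beyond that already carry probability zero. Hence
`trd A_i k ⊆ trd A_s k` for every `k`, and output continuations of `A_i` are output continuations
of `A_s` because both automata have the same inputs. -/

lemma length_of_mem_pathsOfLength {A : pQTS S L T} {n : ℕ} {π : PPath S L T}
    (h : π ∈ pathsOfLength A n) : π.length = n := by
  induction n generalizing π with
  | zero => simp_all [pathsOfLength]
  | succ n ih =>
    simp only [pathsOfLength, Finset.mem_biUnion, Finset.mem_image, Finset.mem_univ,
      true_and] at h
    obtain ⟨π', hπ', x, rfl⟩ := h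
    simp [ih hπ']

section Adversary

variable {A : pQTS S L T} {E : PPath S L T → Option T → ℝ}

lemma IsAdversary.some_eq_zero_of_none_eq_one (hE : IsAdversary A E) {π : PPath S L T}
    (hπ : E π none = 1) (t : T) : E π (some t) = 0 := by
  have hsum : ∑ t, E π (some t) = 0 := by linarith [hE.2.2 π]
  exact (Finset.sum_eq_zero_iff_of_nonneg fun t _ => hE.1 π (some t)).mp hsum t
    (Finset.mem_univ t)

lemma Qprob_eq_zero_of_haltsAfter (hE : IsAdversary A E) {k : ℕ} (hk : haltsAfter E k)
    {π : PPath S L T} (hπ : k < π.length) : Qprob A E π = 0 := by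
  obtain _ | ⟨x, π'⟩ := π
  · simp at hπ
  · have hlen : k ≤ π'.length := Nat.le_of_lt_succ hπ
    simp [Qprob, hE.some_eq_zero_of_none_eq_one (hk π' hlen)]

lemma traceProb_eq_zero_of_haltsAfter (hE : IsAdversary A E) {k : ℕ} (hk : haltsAfter E k)
    {σ : List L} (hσ : k < σ.length) : traceProb A E σ = 0 :=
  Finset.sum_eq_zero fun _ hπ => Qprob_eq_zero_of_haltsAfter hE hk <|
    (length_of_mem_pathsOfLength (Finset.mem_filter.mp hπ).1).symm ▸ hσ

lemma Qprob_congr {E' : PPath S L T → Option T → ℝ} {n : ℕ}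
    (h : ∀ π : PPath S L T, π.length < n → E π = E' π) {π : PPath S L T}
    (hπ : π.length ≤ n) : Qprob A E π = Qprob A E' π := by
  induction π with
  | nil => rfl
  | cons x π' ih =>
    have hlt : π'.length < n := hπ
    simp [Qprob, ih hlt.le, h π' hlt]

lemma traceProb_congr {E' : PPath S L T → Option T → ℝ} {n : ℕ}
    (h : ∀ π : PPath S L T, π.length < n → E π = E' π) {σ : List L}
    (hσ : σ.length ≤ n) : traceProb A E σ = traceProb A E' σ :=
  Finset.sum_congr rfl fun _ hπ => Qprob_congr h <|
    (length_of_mem_pathsOfLength (Finset.mem_filter.mp hπ).1).symm ▸ hσ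

end Adversary

def truncate {α β : Type*} (E : List α → Option β → ℝ) (n : ℕ) : List α → Option β → ℝ :=
  fun π o => if n ≤ π.length then (if o = none then 1 else 0) else E π o

lemma truncate_of_lt {α β : Type*} {E : List α → Option β → ℝ} {n : ℕ} {π : List α}
    (hπ : π.length < n) : truncate E n π = E π :=
  funext fun _ => if_neg (Nat.not_le.mpr hπ)

lemma truncate_none_of_le {α β : Type*} {E : List α → Option β → ℝ} {n : ℕ} {π : List α}
    (hπ : n ≤ π.length) : truncate E n π none = 1 := by
  simp [truncate, hπ]

lemma IsAdversary.truncate {A : pQTS S L T} {E : PPath S L T → Option T → ℝ}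
    (hE : IsAdversary A E) (n : ℕ) : IsAdversary A (truncate E n) := by
  refine ⟨fun π o => ?_, fun π t ht => ?_, fun π => ?_⟩ <;>
    rcases le_or_gt n π.length with hπ | hπ
  · simp only [_root_.truncate, if_pos hπ]; split_ifs <;> norm_num
  · rw [truncate_of_lt hπ]; exact hE.1 π o
  · simp [_root_.truncate, hπ] at ht
  · rw [truncate_of_lt hπ] at ht; exact hE.2.1 π t ht
  · simp [_root_.truncate, hπ]
  · rw [truncate_of_lt hπ]; exact hE.2.2 π

theorem trd_subset_trd_of_trdAll_subset {S' T' : Type} [Fintype S'] [Fintype T']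
    {A : pQTS S L T} {B : pQTS S' L T'} (hAB : trdAll A ⊆ trdAll B) (k : ℕ) :
    trd A k ⊆ trd B k := by
  rintro H ⟨E, hE, hEk, hHE⟩
  obtain ⟨F, hF, hHF⟩ := hAB ⟨E, hE, hHE⟩
  have hFk : haltsAfter (truncate F k) k := fun _ => truncate_none_of_le
  refine ⟨truncate F k, hF.truncate k, hFk, fun σ => ?_⟩
  rcases le_or_gt σ.length k with hσ | hσ
  · exact (hHF σ).trans (traceProb_congr (fun _ hπ => (truncate_of_lt hπ).symm) hσ)
  · rw [hHE σ, traceProb_eq_zero_of_haltsAfter hE hEk hσ,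
      traceProb_eq_zero_of_haltsAfter (hF.truncate k) hFk hσ]

theorem stmt9_general {S1 T1 S2 T2 : Type} [Fintype S1] [Fintype T1] [Fintype S2] [Fintype T2]
    (Ai : pQTS S1 L T1) (As : pQTS S2 L T2)
    (hin : Ai.inputs = As.inputs)
    (hTD : trdAll Ai ⊆ trdAll As) :
    pioco Ai As := by
  rintro k H - H' ⟨hH'trd, hprefix, hinputs⟩
  exact ⟨trd_subset_trd_of_trdAll_subset hTD (k + 1) hH'trd, hprefix,
    fun σ a hσ ha => hinputs σ a hσ (hin ▸ ha)⟩

theorem stmt9 {S1 T1 S2 T2 : Type} [Fintype S1] [Fintype T1] [Fintype S2] [Fintype T2]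
    (Ai : pQTS S1 L T1) (As : pQTS S2 L T2)
    (hin : Ai.inputs = As.inputs) (hdel : Ai.delta = As.delta)
    (hTD : trdAll Ai ⊆ trdAll As) :
    pioco Ai As :=
  stmt9_general Ai As hin hTD
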